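/- Let J be the ideal of ℚ[Λ] generated by {1 − e^α : α ∈ Φ⁺}. Then for every integer m ≥ 1, every f ∈ J^m and every simple root γ ∈ Δ, one has L_{s_γ}(f) ∈ J^{m−1}. -/

import Mathlib

/- Context: a reduced crystallographic root system `Φ` spanning a finite-dimensional
`ℚ`-vector space `V`, with Weyl group `W` (a Coxeter system whose simple reflections
are indexed by the base `Δ` of simple roots), positive roots `Φ⁺`, weight lattice
`Λ = {λ ∈ V : ⟨λ, α^∨⟩ ∈ ℤ for all α ∈ Φ}`, and `ρ = (1/2)·Σ_{α ∈ Φ⁺} α`.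
`ℚ[Λ]` is the group algebra of `Λ` over `ℚ` with basis `e^λ`, on which `W` acts by ring
automorphisms via `w · e^λ = e^{w(λ)}`.  For a simple root `α`, the Demazure operator
`L_{s_α}` is the unique `ℚ`-linear map with `(1 - e^α) · L_{s_α}(f) = f - s_α · f`, and for
a reduced word `w = s_{α₁} ⋯ s_{α_k}` we set `L_w = L_{s_{α₁}} ∘ ⋯ ∘ L_{s_{α_k}}`. -/

/-- All the data of the context: the root system, the simple/positive roots, `ρ`, the
weight lattice `Λ`, and the Weyl group `W` with its Coxeter structure and its action
on `V` (where the simple reflection indexed by `b : B` acts as the reflection attached to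
the simple root `idx b`). -/
structure RootCtx (V : Type) [AddCommGroup V] [Module ℚ V]
    (B : Type) (W : Type) [Group W] (M : CoxeterMatrix B) where
  finV : FiniteDimensional ℚ V
  /-- the finite set of roots -/
  Φ : Finset V
  span_eq_top : Submodule.span ℚ (Φ : Set V) = ⊤
  /-- `coroot α` is the linear functional `⟨·, α^∨⟩` -/
  coroot : V → V →ₗ[ℚ] ℚ
  coroot_self : ∀ α ∈ Φ, coroot α α = 2
  crystallographic : ∀ α ∈ Φ, ∀ β ∈ Φ, ∃ n : ℤ, (n : ℚ) = coroot α β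
  /-- the root system is reduced -/
  reduced : ∀ α ∈ Φ, ∀ c : ℚ, c • α ∈ Φ → c = 1 ∨ c = -1
  reflect_root_mem : ∀ α ∈ Φ, ∀ β ∈ Φ, β - coroot α β • α ∈ Φ
  /-- the base of simple roots -/
  Δ : Finset V
  Δ_sub : Δ ⊆ Φ
  Δ_indep : LinearIndependent ℚ (fun β : {x // x ∈ Δ} => (β : V))
  /-- the set of positive roots -/
  Φpos : Finset V
  Φpos_sub : Φpos ⊆ Φ
  mem_Φpos : ∀ α ∈ Φ, (α ∈ Φpos ↔
    ∃ c : V → ℚ, (∀ β ∈ Δ, 0 ≤ c β) ∧ α = ∑ β ∈ Δ, c β • β)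
  pos_or_neg : ∀ α ∈ Φ, α ∈ Φpos ∨ -α ∈ Φpos
  /-- the half-sum of the positive roots -/
  ρ : V
  ρ_def : (2 : ℚ) • ρ = ∑ α ∈ Φpos, α
  /-- the weight lattice -/
  Λ : AddSubgroup V
  mem_Λ : ∀ x : V, x ∈ Λ ↔ ∀ α ∈ Φ, ∃ n : ℤ, (n : ℚ) = coroot α x
  ρ_mem : ρ ∈ Λ
  root_mem : ∀ α ∈ Φ, α ∈ Λ
  /-- the Weyl group `W` as a Coxeter system, whose simple reflections are the reflections
  in the simple roots -/
  cs : CoxeterSystem M W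
  /-- the indexing of the simple roots by `B` -/
  idx : B ≃ {α // α ∈ Δ}
  /-- the (faithful) action of the Weyl group on `V` -/
  act : W →* (V ≃ₗ[ℚ] V)
  act_faithful : Function.Injective act
  act_simple : ∀ (b : B) (x : V),
    act (cs.simple b) x = x - coroot (idx b : V) x • (idx b : V)
  act_mem : ∀ (w : W), ∀ x ∈ Λ, act w x ∈ Λ

namespace RootCtx

variable {V B W : Type} [AddCommGroup V] [Module ℚ V] [Group W] {M : CoxeterMatrix B}
variable (ctx : RootCtx V B W M)

/-- The group algebra `ℚ[Λ]`. -/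
abbrev QΛ : Type := AddMonoidAlgebra ℚ ↥ctx.Λ

/-- The basis element `e^λ` of `ℚ[Λ]`. -/
noncomputable def e (lam : ↥ctx.Λ) : ctx.QΛ := AddMonoidAlgebra.of' ℚ ↥ctx.Λ lam

/-- `ρ` as an element of the weight lattice. -/
def ρΛ : ↥ctx.Λ := ⟨ctx.ρ, ctx.ρ_mem⟩

/-- The simple root indexed by `b`, as an element of the weight lattice. -/
def simpleRoot (b : B) : ↥ctx.Λ :=
  ⟨(ctx.idx b : V), ctx.root_mem _ (ctx.Δ_sub (ctx.idx b).2)⟩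

/-- The action of `w ∈ W` on the weight lattice `Λ`. -/
noncomputable def actΛ (w : W) : ↥ctx.Λ ≃+ ↥ctx.Λ where
  toFun x := ⟨ctx.act w x, ctx.act_mem w x x.2⟩
  invFun x := ⟨ctx.act w⁻¹ x, ctx.act_mem w⁻¹ x x.2⟩
  left_inv x := by
    ext
    show (ctx.act w⁻¹ * ctx.act w) (x : V) = (x : V)
    rw [← map_mul, inv_mul_cancel, map_one]
    rfl
  right_inv x := by
    ext
    show (ctx.act w * ctx.act w⁻¹) (x : V) = (x : V)
    rw [← map_mul, mul_inv_cancel, map_one]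
    rfl
  map_add' x y := by
    ext
    show ctx.act w (↑x + ↑y) = ctx.act w x + ctx.act w y
    exact map_add _ _ _

/-- The action of `w ∈ W` on `ℚ[Λ]` by `ℚ`-algebra (in particular ring) automorphisms,
with `w · e^λ = e^{w(λ)}`. -/
noncomputable def wact (w : W) : ctx.QΛ ≃ₐ[ℚ] ctx.QΛ :=
  AddMonoidAlgebra.domCongr ℚ ℚ (ctx.actΛ w)

/-- The augmentation `ε : ℚ[Λ] → ℚ`, the `ℚ`-algebra homomorphism with `ε(e^λ) = 1`. -/
noncomputable def eps : ctx.QΛ →ₐ[ℚ] ℚ := AddMonoidAlgebra.lift ℚ ℚ ↥ctx.Λ 1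

/-- `L` is *the* Demazure operator `L_{s_α}` attached to the simple root `α = idx b`:
the unique `ℚ`-linear endomorphism of `ℚ[Λ]` satisfying
`(1 - e^α) * L f = f - s_α · f` for all `f`. -/
def IsDemazure (b : B) (L : ctx.QΛ →ₗ[ℚ] ctx.QΛ) : Prop :=
  ∀ f : ctx.QΛ, (1 - ctx.e (ctx.simpleRoot b)) * L f = f - ctx.wact (ctx.cs.simple b) f

/-- Given a family `L` of Demazure operators indexed by the simple roots,
`Lword L [α₁, …, α_k] = L_{s_{α₁}} ∘ ⋯ ∘ L_{s_{α_k}}`; applied to reduced words it yields the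
operators `L_w`. -/
noncomputable def Lword (L : B → ctx.QΛ →ₗ[ℚ] ctx.QΛ) (ω : List B) :
    ctx.QΛ →ₗ[ℚ] ctx.QΛ :=
  ω.foldr (fun b g => (L b).comp g) LinearMap.id

/-- The Bruhat order on `W`: `v ≤ w` iff some (equivalently, every) reduced word for `w`
contains a subword which is a reduced word for `v`. -/
def BruhatLE (v w : W) : Prop :=
  ∃ ω : List B, ctx.cs.IsReduced ω ∧ ctx.cs.wordProd ω = w ∧
    ∃ ω' : List B, ω'.Sublist ω ∧ ctx.cs.IsReduced ω' ∧ ctx.cs.wordProd ω' = v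

end RootCtx

/-- The ideal `J` of `ℚ[Λ]` generated by `{1 − e^α : α ∈ Φ⁺}`. -/
noncomputable def RootCtx.posIdeal {V B W : Type} [AddCommGroup V] [Module ℚ V] [Group W]
    {M : CoxeterMatrix B} (ctx : RootCtx V B W M) : Ideal ctx.QΛ :=
  Ideal.span {x : ctx.QΛ | ∃ α : V, ∃ hα : α ∈ ctx.Φpos,
    x = 1 - ctx.e ⟨α, ctx.root_mem α (ctx.Φpos_sub hα)⟩}

/-! A Demazure operator `L` with `(1 - e^γ) L f = f - s_γ f` is a twisted derivation:
`L (f g) = L f · g + s_γ f · L g`. Since `s_γ` permutes the roots and `1 - e^{-α} = -e^{-α} (1 - e^α)`,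
the ideal `J` is `s_γ`-stable, so writing an element of `J^{m+1}` as a sum of products `g a` with
`g ∈ J`, `a ∈ J^m`, the twisted Leibniz rule and induction on `m` give `L (g a) ∈ J^m`. -/

section TwistedDerivation

variable {R F G : Type*} [CommRing R] [FunLike F R R] [MulHomClass F R R] [FunLike G R R]
  {σ : F} {d : R} {L : G}

theorem twisted_leibniz (hd : d ∈ nonZeroDivisors R) (hL : ∀ f, d * L f = f - σ f) (f g : R) :
    L (f * g) = L f * g + σ f * L g := by
  refine (mul_cancel_left_mem_nonZeroDivisors hd).mp ?_
  rw [hL, map_mul, mul_add, ← mul_assoc, hL, mul_left_comm, hL]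
  ring

theorem map_mem_pow_of_mem_pow_succ [AddMonoidHomClass G R R] (hd : d ∈ nonZeroDivisors R)
    (hL : ∀ f, d * L f = f - σ f) {I : Ideal R} (hI : ∀ x ∈ I, σ x ∈ I) {m : ℕ} {f : R} (hf : f ∈ I ^ (m + 1)) :
    L f ∈ I ^ m := by
  induction m generalizing f with
  | zero => simp [Ideal.one_eq_top]
  | succ m ih =>
    rw [pow_succ'] at hf
    refine Submodule.mul_induction_on hf (fun g hg a ha => ?_)
      (fun x y hx hy => by simpa only [map_add] using add_mem hx hy)
    rw [twisted_leibniz hd hL]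
    refine add_mem (Ideal.mul_mem_left _ _ ha) ?_
    rw [pow_succ']
    exact Ideal.mul_mem_mul (hI g hg) (ih ha)

end TwistedDerivation

instance AddSubgroup.instUniqueSums {G : Type*} [AddGroup G] [UniqueSums G] (H : AddSubgroup G) :
    UniqueSums H :=
  UniqueSums.of_injective_addHom H.subtype.toAddHom Subtype.coe_injective inferInstance

namespace RootCtx

variable {V B W : Type} [AddCommGroup V] [Module ℚ V] [Group W] {M : CoxeterMatrix B}
  (ctx : RootCtx V B W M)

theorem act_mem_Φ (w : W) {α : V} (hα : α ∈ ctx.Φ) : ctx.act w α ∈ ctx.Φ := by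
  induction w using ctx.cs.simple_induction_left with
  | one => simpa using hα
  | mul_simple_left w b ih =>
    rw [map_mul, LinearEquiv.mul_apply, act_simple]
    exact ctx.reflect_root_mem _ (ctx.Δ_sub (ctx.idx b).2) _ ih

theorem e_add (x y : ctx.Λ) : ctx.e (x + y) = ctx.e x * ctx.e y := by
  simp [e, AddMonoidAlgebra.single_mul_single]

theorem e_zero : ctx.e 0 = 1 := rfl

theorem one_sub_e_mem_posIdeal {α : V} (hα : α ∈ ctx.Φ) :
    1 - ctx.e ⟨α, ctx.root_mem α hα⟩ ∈ ctx.posIdeal := by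
  rcases ctx.pos_or_neg α hα with hpos | hneg
  · exact Ideal.subset_span ⟨α, hpos, rfl⟩
  · set x : ctx.Λ := ⟨α, ctx.root_mem α hα⟩
    have hx : 1 - ctx.e (-x) ∈ ctx.posIdeal := Ideal.subset_span ⟨-α, hneg, rfl⟩
    have h : 1 - ctx.e x = -ctx.e x * (1 - ctx.e (-x)) := by
      rw [neg_mul, mul_sub, ← e_add, add_neg_cancel, e_zero]
      ring
    rw [h]
    exact Ideal.mul_mem_left _ _ hx

theorem wact_mem_posIdeal (w : W) {f : ctx.QΛ} (hf : f ∈ ctx.posIdeal) :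
    ctx.wact w f ∈ ctx.posIdeal := by
  refine (Ideal.span_le (I := ctx.posIdeal.comap (ctx.wact w))).mpr ?_ hf
  rintro _ ⟨α, hα, rfl⟩
  simp only [SetLike.mem_coe, Ideal.mem_comap, map_sub, map_one, wact, e,
    AddMonoidAlgebra.of'_apply, AddMonoidAlgebra.domCongr_single]
  exact ctx.one_sub_e_mem_posIdeal (ctx.act_mem_Φ w (ctx.Φpos_sub hα))

theorem one_sub_e_simpleRoot_ne_zero (b : B) : 1 - ctx.e (ctx.simpleRoot b) ≠ 0 := by
  intro h
  have h0 : ctx.simpleRoot b = 0 :=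
    (AddMonoidAlgebra.single_left_inj one_ne_zero).mp <| by
      simpa [e, AddMonoidAlgebra.one_def] using (sub_eq_zero.mp h).symm
  have h2 := ctx.coroot_self _ (ctx.Δ_sub (ctx.idx b).2)
  rw [show (ctx.idx b : V) = 0 from congrArg Subtype.val h0] at h2
  simp at h2

end RootCtx

/-- for every `m ≥ 1`, every `f ∈ J^m` and every simple root `γ ∈ Δ`
(indexed by `b : B`), one has `L_{s_γ}(f) ∈ J^{m−1}`. -/
theorem stmt13 {V B W : Type} [AddCommGroup V] [Module ℚ V] [Group W] {M : CoxeterMatrix B}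
    (ctx : RootCtx V B W M)
    (m : ℕ) (hm : 1 ≤ m) (f : ctx.QΛ) (hf : f ∈ ctx.posIdeal ^ m)
    (b : B) (L : ctx.QΛ →ₗ[ℚ] ctx.QΛ) (hL : ctx.IsDemazure b L) :
    L f ∈ ctx.posIdeal ^ (m - 1) := by
  obtain ⟨k, rfl⟩ := Nat.exists_eq_add_of_le' hm
  exact map_mem_pow_of_mem_pow_succ
    (mem_nonZeroDivisors_of_ne_zero (ctx.one_sub_e_simpleRoot_ne_zero b)) hL
    (fun _ => ctx.wact_mem_posIdeal _) hf
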